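/- For every complex number α with Re(α) > 0 and every integer n ≥ 0, the explicit expansion p_n(x;α) = Σ_{ν=0}^{n} [ (2^{ν+1} (α+1/2)_ν / ν!) Σ_{μ=0}^{ν} binom(ν,μ) (−1)^μ (α+μ)^{2n+1} / (2α+μ)_{ν+1} ] x^ν holds; equivalently, the inner ratio 1/(2α+μ)_{ν+1} may be written as Γ(2α+μ)/Γ(2α+μ+ν+1). -/

import Mathlib

/-!
The operator `P ↦ x²P'' − x(2x − 1 − 2α)P' − ((2α+1)x − α²)P` sends `x^ν` to
`(α+ν)² x^ν − (2ν+2α+1) x^(ν+1)`, so it suffices that the claimed coefficients `c_{n,ν}` obey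
the matching two-term recursion in `n` and vanish for `ν > n`. Writing
`c_{n,ν} = A_ν S_{n,ν}` with `A_ν = 2^(ν+1) (α+1/2)_ν / ν!`, the recursion reduces to
`S_{n+1,ν+1} = (α+ν+1)² S_{n,ν+1} − (ν+1) S_{n,ν}`, which holds term by term because
`(α+ν+1)² − (ν+1−μ)(2α+μ+ν+1) = (α+μ)²`. Vanishing then propagates from `n = 0`: the partial
fraction expansion `ν!/(z)_{ν+1} = Σ_k (−1)^k C(ν,k)/(z+k)` (the `ν`-th forward difference of
`1/z`) turns `ν! S_{0,ν}` into a double sum whose symmetrization in `(μ, k)` is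
`(Σ_μ (−1)^μ C(ν,μ))² = 0`. The Gamma form is `Γ(z+ν+1) = (z)_{ν+1} Γ(z)`.
-/

open Polynomial Finset

/-- The polynomials `p_n(x; α)` defined recursively by
`p_0 = 1`, `p_{n+1} = x² p_n'' − x(2x − 1 − 2α) p_n' − ((2α+1)x − α²) p_n`. -/
noncomputable def pseq (α : ℂ) : ℕ → ℂ[X]
  | 0 => 1
  | n + 1 =>
      X ^ 2 * derivative (derivative (pseq α n))
        - X * (2 * X - C (1 + 2 * α)) * derivative (pseq α n)
        - (C (2 * α + 1) * X - C (α ^ 2)) * pseq α n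

section NatCastShift

variable {R : Type*} [CommRing R] {x : R}

theorem add_natCast_ne_neg_natCast (hx : ∀ k : ℕ, x ≠ -k) (m k : ℕ) : x + m ≠ -k := by
  intro h
  apply hx (m + k)
  push_cast
  linear_combination h

theorem add_natCast_ne_zero_of_forall_ne_neg (hx : ∀ k : ℕ, x ≠ -k) (k : ℕ) : x + k ≠ 0 := by
  simpa using add_natCast_ne_neg_natCast hx k 0

theorem ascPochhammer_eval_ne_zero [IsDomain R] (hx : ∀ k : ℕ, x ≠ -k) (n : ℕ) :
    (ascPochhammer R n).eval x ≠ 0 := by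
  rw [Ne, ascPochhammer_eval_eq_zero_iff]
  rintro ⟨k, -, hk⟩
  exact hx k (neg_eq_iff_eq_neg.mp hk.symm)

end NatCastShift

section PartialFractions

variable {K : Type*} [Field K] {x : K}

theorem fwdDiff_iter_inv_add (hx : ∀ k : ℕ, x ≠ -k) (ν y : ℕ) :
    (fwdDiff 1)^[ν] (fun y : ℕ ↦ (x + y)⁻¹) y
      = (-1) ^ ν * ν.factorial / (ascPochhammer K (ν + 1)).eval (x + y) := by
  induction ν generalizing y with
  | zero => simp [ascPochhammer_one]
  | succ ν ih =>
    have hxy : x + y ≠ 0 := add_natCast_ne_zero_of_forall_ne_neg hx y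
    have hP := ascPochhammer_eval_ne_zero (add_natCast_ne_neg_natCast hx y) (ν + 1)
    have hP' : (ascPochhammer K (ν + 1)).eval (x + y + 1) ≠ 0 := by
      simpa [add_assoc] using
        ascPochhammer_eval_ne_zero (add_natCast_ne_neg_natCast hx (y + 1)) (ν + 1)
    have hsucc_left : (ascPochhammer K (ν + 2)).eval (x + y)
        = (x + y) * (ascPochhammer K (ν + 1)).eval (x + y + 1) := by
      rw [ascPochhammer_succ_left, eval_mul, eval_comp]
      simp
    have hsucc_right := ascPochhammer_succ_eval (ν + 1) (x + y)
    rw [hsucc_left] at hsucc_right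
    rw [Function.iterate_succ_apply', fwdDiff, ih, ih, hsucc_left, Nat.factorial_succ]
    push_cast [← add_assoc] at hsucc_right ⊢
    field_simp
    linear_combination (-1) ^ (ν + 1) * (ν.factorial : K) * hsucc_right

theorem sum_range_neg_one_pow_mul_choose_div_add (hx : ∀ k : ℕ, x ≠ -k) (ν : ℕ) :
    ∑ k ∈ range (ν + 1), (-1) ^ k * ν.choose k / (x + k)
      = ν.factorial / (ascPochhammer K (ν + 1)).eval x := by
  have h := fwdDiff_iter_eq_sum_shift 1 (fun y : ℕ ↦ (x + y)⁻¹) ν 0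
  simp only [fwdDiff_iter_inv_add hx, zero_add, smul_eq_mul, mul_one, Nat.cast_zero,
    add_zero] at h
  calc ∑ k ∈ range (ν + 1), (-1) ^ k * ν.choose k / (x + k)
      = (-1) ^ ν * ∑ k ∈ range (ν + 1), ((-1 : ℤ) ^ (ν - k) * ν.choose k) • (x + k)⁻¹ := by
        rw [mul_sum]
        refine sum_congr rfl fun k hk ↦ ?_
        have hsign : (-1 : K) ^ ν * (-1) ^ (ν - k) = (-1) ^ k := by
          rw [← pow_add, show ν + (ν - k) = k + 2 * (ν - k) by grind, pow_add, pow_mul]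
          simp
        rw [zsmul_eq_mul, ← hsign]
        push_cast
        ring
    _ = ν.factorial / (ascPochhammer K (ν + 1)).eval x := by
        rw [← h, ← mul_div_assoc, ← mul_assoc, ← pow_add, Even.neg_one_pow ⟨ν, rfl⟩, one_mul]

theorem sum_range_sum_range_neg_one_pow_mul_choose_div_eq_zero [CharZero K] {a : K}
    (ha : ∀ k : ℕ, 2 * a ≠ -k) {ν : ℕ} (hν : ν ≠ 0) :
    ∑ μ ∈ range (ν + 1), ∑ k ∈ range (ν + 1),
      (-1) ^ (μ + k) * ν.choose μ * ν.choose k * (a + μ) / (2 * a + μ + k) = 0 := by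
  set T : ℕ → ℕ → K := fun μ k ↦
    (-1) ^ (μ + k) * ν.choose μ * ν.choose k * (a + μ) / (2 * a + μ + k)
  -- the numerators of `T μ k` and `T k μ` add up to their common denominator
  have hsymm (μ k : ℕ) : T μ k + T k μ = (-1) ^ μ * ν.choose μ * ((-1) ^ k * ν.choose k) := by
    have hd : 2 * a + μ + k ≠ 0 := by
      simpa [add_assoc] using add_natCast_ne_zero_of_forall_ne_neg ha (μ + k)
    simp only [T]
    rw [show 2 * a + k + μ = 2 * a + μ + k by ring, ← add_div, div_eq_iff hd]
    ring
  have halt : ∑ μ ∈ range (ν + 1), (-1 : K) ^ μ * ν.choose μ = 0 := by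
    exact_mod_cast Int.alternating_sum_range_choose_of_ne hν
  have htwice : 2 * ∑ μ ∈ range (ν + 1), ∑ k ∈ range (ν + 1), T μ k = 0 := by
    calc 2 * ∑ μ ∈ range (ν + 1), ∑ k ∈ range (ν + 1), T μ k
        = ∑ μ ∈ range (ν + 1), ∑ k ∈ range (ν + 1), (T μ k + T k μ) := by
          rw [two_mul]
          nth_rewrite 2 [sum_comm]
          simp only [← sum_add_distrib]
      _ = 0 := by simp only [hsymm, ← mul_sum, ← sum_mul, halt, zero_mul]
  simpa using htwice

end PartialFractions

section Derivative

variable {R : Type*} [CommRing R]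

theorem X_mul_derivative_X_pow (ν : ℕ) : (X : R[X]) * derivative (X ^ ν) = C (ν : R) * X ^ ν := by
  cases ν with
  | zero => simp
  | succ ν => rw [derivative_X_pow_succ]; push_cast; ring

theorem X_sq_mul_derivative_derivative (P : R[X]) :
    X ^ 2 * derivative (derivative P) = X * derivative (X * derivative P) - X * derivative P := by
  simp only [derivative_mul, derivative_X]
  ring

end Derivative

noncomputable def pseqStep (α : ℂ) : ℂ[X] →ₗ[ℂ] ℂ[X] where
  toFun P := X ^ 2 * derivative (derivative P) - X * (2 * X - C (1 + 2 * α)) * derivative P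
    - (C (2 * α + 1) * X - C (α ^ 2)) * P
  map_add' P Q := by simp only [derivative_add]; ring
  map_smul' c P := by simp only [smul_eq_C_mul, derivative_C_mul, RingHom.id_apply]; ring

-- `pseqInnerSum α n ν` and `pseqCoeff α n ν` are `S_{n,ν}` and `c_{n,ν}` of the header.
noncomputable def pseqInnerSum (α : ℂ) (n ν : ℕ) : ℂ :=
  ∑ μ ∈ range (ν + 1),
    (Nat.choose ν μ : ℂ) * (-1 : ℂ) ^ μ * (α + μ) ^ (2 * n + 1) /
      (ascPochhammer ℂ (ν + 1)).eval (2 * α + μ)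

noncomputable def pseqCoeff (α : ℂ) (n ν : ℕ) : ℂ :=
  (2 : ℂ) ^ (ν + 1) * (ascPochhammer ℂ ν).eval (α + 1 / 2) / (Nat.factorial ν : ℂ) *
    pseqInnerSum α n ν

section Pseq

variable {α : ℂ}

theorem pseq_succ (n : ℕ) : pseq α (n + 1) = pseqStep α (pseq α n) := rfl

theorem pseqStep_X_pow (ν : ℕ) :
    pseqStep α (X ^ ν) = C ((α + ν) ^ 2) * X ^ ν - C (2 * ν + 2 * α + 1) * X ^ (ν + 1) := by
  have h2 := X_sq_mul_derivative_derivative (X ^ ν : ℂ[X])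
  simp only [X_mul_derivative_X_pow, derivative_C_mul, mul_left_comm X (C _)] at h2
  simp only [pseqStep, LinearMap.coe_mk, AddHom.coe_mk, h2]
  rw [mul_assoc X, mul_left_comm X, X_mul_derivative_X_pow]
  simp only [C_add, C_mul, C_pow, C_1, C_ofNat]
  ring

theorem pseqStep_sum (c : ℕ → ℂ) (m : ℕ) :
    pseqStep α (∑ ν ∈ range m, C (c ν) * X ^ ν)
      = ∑ ν ∈ range m, C (c ν * (α + ν) ^ 2) * X ^ ν
        - ∑ ν ∈ range m, C (c ν * (2 * ν + 2 * α + 1)) * X ^ (ν + 1) := by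
  simp only [map_sum, ← smul_eq_C_mul, map_smul, pseqStep_X_pow, ← sum_sub_distrib]
  refine sum_congr rfl fun ν _ ↦ ?_
  simp only [smul_eq_C_mul, C_mul]
  ring

theorem pseqInnerSum_zero_right (n : ℕ) : pseqInnerSum α n 0 = α ^ (2 * n + 1) / (2 * α) := by
  simp [pseqInnerSum, ascPochhammer_one]

theorem pseqInnerSum_zero_left (hα : ∀ k : ℕ, 2 * α ≠ -k) {ν : ℕ} (hν : ν ≠ 0) :
    pseqInnerSum α 0 ν = 0 := by
  have hfact : (ν.factorial : ℂ) ≠ 0 := by exact_mod_cast ν.factorial_ne_zero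
  suffices ν.factorial * pseqInnerSum α 0 ν = ∑ μ ∈ range (ν + 1), ∑ k ∈ range (ν + 1),
      (-1) ^ (μ + k) * ν.choose μ * ν.choose k * (α + μ) / (2 * α + μ + k) by
    rw [sum_range_sum_range_neg_one_pow_mul_choose_div_eq_zero hα hν] at this
    exact (mul_eq_zero.mp this).resolve_left hfact
  rw [pseqInnerSum, mul_sum]
  refine sum_congr rfl fun μ _ ↦ ?_
  calc (ν.factorial : ℂ) * (ν.choose μ * (-1) ^ μ * (α + μ) ^ (2 * 0 + 1) /
        (ascPochhammer ℂ (ν + 1)).eval (2 * α + μ))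
      = (-1) ^ μ * ν.choose μ * (α + μ) *
          (ν.factorial / (ascPochhammer ℂ (ν + 1)).eval (2 * α + μ)) := by ring
    _ = _ := by
      rw [← sum_range_neg_one_pow_mul_choose_div_add (add_natCast_ne_neg_natCast hα μ), mul_sum]
      refine sum_congr rfl fun k _ ↦ ?_
      ring

theorem pseqInnerSum_succ_succ (hα : ∀ k : ℕ, 2 * α ≠ -k) (n ν : ℕ) :
    pseqInnerSum α (n + 1) (ν + 1)
      = (α + ν + 1) ^ 2 * pseqInnerSum α n (ν + 1) - (ν + 1) * pseqInnerSum α n ν := by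
  have hextend : pseqInnerSum α n ν = ∑ μ ∈ range (ν + 2),
      (ν.choose μ : ℂ) * (-1) ^ μ * (α + μ) ^ (2 * n + 1) /
        (ascPochhammer ℂ (ν + 1)).eval (2 * α + μ) := by
    simp [pseqInnerSum, sum_range_succ _ (ν + 1)]
  rw [hextend, pseqInnerSum, pseqInnerSum, mul_sum, mul_sum, ← sum_sub_distrib]
  refine sum_congr rfl fun μ hμ ↦ ?_
  have hμ : μ ≤ ν + 1 := Nat.lt_succ_iff.mp (mem_range.mp hμ)
  have hz := add_natCast_ne_neg_natCast hα μ
  have hP := ascPochhammer_eval_ne_zero hz (ν + 1)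
  have hlast : 2 * α + μ + (ν + 1) ≠ 0 := by
    exact_mod_cast add_natCast_ne_zero_of_forall_ne_neg hz (ν + 1)
  have hchoose : (ν.choose μ : ℂ) = (ν + 1).choose μ * (ν + 1 - μ) / (ν + 1) := by
    have h := congrArg (Nat.cast : ℕ → ℂ) (Nat.choose_mul_succ_eq ν μ)
    push_cast [Nat.cast_sub hμ] at h
    rw [eq_div_iff (by exact_mod_cast ν.succ_ne_zero), h]
  rw [ascPochhammer_succ_eval (ν + 1), hchoose]
  generalize (ascPochhammer ℂ (ν + 1)).eval (2 * α + μ) = P at hP ⊢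
  push_cast at hlast ⊢
  generalize hd : 2 * α + μ + (ν + 1 : ℂ) = d at hlast ⊢
  have hkey : (α + ν + 1) ^ 2 - d * (ν + 1 - μ) = (α + μ) ^ 2 := by rw [← hd]; ring
  field_simp
  rw [hkey]
  ring

theorem pseqInnerSum_eq_zero_of_lt (hα : ∀ k : ℕ, 2 * α ≠ -k) {n ν : ℕ} (h : n < ν) :
    pseqInnerSum α n ν = 0 := by
  induction n generalizing ν with
  | zero => exact pseqInnerSum_zero_left hα h.ne'
  | succ n ih =>
    obtain ⟨ν, rfl⟩ : ∃ ν', ν = ν' + 1 := ⟨ν - 1, by omega⟩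
    rw [pseqInnerSum_succ_succ hα, ih (by omega), ih (by omega), mul_zero, mul_zero, sub_zero]

theorem pseqCoeff_zero_zero (hα : α ≠ 0) : pseqCoeff α 0 0 = 1 := by
  simp only [pseqCoeff, pseqInnerSum_zero_right, ascPochhammer_zero, eval_one,
    Nat.factorial_zero, Nat.cast_one]
  field_simp
  ring

theorem pseqCoeff_succ_zero (n : ℕ) : pseqCoeff α (n + 1) 0 = α ^ 2 * pseqCoeff α n 0 := by
  simp only [pseqCoeff, pseqInnerSum_zero_right]
  ring

theorem pseqCoeff_succ_succ (hα : ∀ k : ℕ, 2 * α ≠ -k) (n ν : ℕ) :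
    pseqCoeff α (n + 1) (ν + 1)
      = (α + ν + 1) ^ 2 * pseqCoeff α n (ν + 1) - (2 * ν + 2 * α + 1) * pseqCoeff α n ν := by
  have hlead : (2 : ℂ) ^ (ν + 2) * (ascPochhammer ℂ (ν + 1)).eval (α + 1 / 2)
        / ((ν + 1).factorial : ℂ) * (ν + 1)
      = (2 * ν + 2 * α + 1) * ((2 : ℂ) ^ (ν + 1) * (ascPochhammer ℂ ν).eval (α + 1 / 2)
        / (ν.factorial : ℂ)) := by
    rw [ascPochhammer_succ_eval, Nat.factorial_succ]
    have : (ν + 1 : ℂ) ≠ 0 := by exact_mod_cast ν.succ_ne_zero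
    push_cast
    field_simp
    ring
  simp only [pseqCoeff, pseqInnerSum_succ_succ hα]
  linear_combination (-pseqInnerSum α n ν) * hlead

theorem pseqCoeff_eq_zero_of_lt (hα : ∀ k : ℕ, 2 * α ≠ -k) {n ν : ℕ} (h : n < ν) :
    pseqCoeff α n ν = 0 := by
  rw [pseqCoeff, pseqInnerSum_eq_zero_of_lt hα h, mul_zero]

theorem pseq_eq_sum_pseqCoeff (hα : ∀ k : ℕ, 2 * α ≠ -k) (n : ℕ) :
    pseq α n = ∑ ν ∈ range (n + 1), C (pseqCoeff α n ν) * X ^ ν := by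
  induction n with
  | zero =>
    have hα0 : α ≠ 0 := by simpa using hα 0
    simp [pseq, pseqCoeff_zero_zero hα0]
  | succ n ih =>
    have hshift : ∑ ν ∈ range (n + 1), C (pseqCoeff α n ν * (α + ν) ^ 2) * X ^ ν
        = ∑ ν ∈ range (n + 1), C (pseqCoeff α n (ν + 1) * (α + ↑(ν + 1)) ^ 2) * X ^ (ν + 1)
          + C (pseqCoeff α n 0 * α ^ 2) := by
      calc _ = ∑ ν ∈ range (n + 2), C (pseqCoeff α n ν * (α + ν) ^ 2) * X ^ ν := by
            rw [sum_range_succ _ (n + 1), pseqCoeff_eq_zero_of_lt hα n.lt_succ_self]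
            simp
        _ = _ := by
            rw [sum_range_succ']
            simp
    rw [pseq_succ, ih, pseqStep_sum, hshift, sum_range_succ' _ (n + 1), pseqCoeff_succ_zero,
      add_sub_right_comm, ← sum_sub_distrib]
    congr 1
    · refine sum_congr rfl fun ν _ ↦ ?_
      rw [pseqCoeff_succ_succ hα, ← sub_mul, ← C_sub]
      push_cast
      ring_nf
    · simp [mul_comm]

end Pseq

theorem stmt5 (α : ℂ) (hα : 0 < α.re) (n : ℕ) :
    pseq α n
      = ∑ ν ∈ range (n + 1),
          C ((2 : ℂ) ^ (ν + 1) * (ascPochhammer ℂ ν).eval (α + 1 / 2) / (Nat.factorial ν : ℂ) *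
              ∑ μ ∈ range (ν + 1),
                (Nat.choose ν μ : ℂ) * (-1 : ℂ) ^ μ * (α + μ) ^ (2 * n + 1) /
                  (ascPochhammer ℂ (ν + 1)).eval (2 * α + μ)) *
            X ^ ν
    ∧ ∀ ν μ : ℕ,
        ((ascPochhammer ℂ (ν + 1)).eval (2 * α + μ))⁻¹
          = Complex.Gamma (2 * α + μ) / Complex.Gamma (2 * α + μ + ν + 1) := by
  have h2α : ∀ k : ℕ, 2 * α ≠ -k := fun k h ↦ by
    have hre := congrArg Complex.re h
    simp only [Complex.mul_re, Complex.neg_re, Complex.natCast_re] at hre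
    norm_num at hre
    linarith [k.cast_nonneg (α := ℝ)]
  refine ⟨pseq_eq_sum_pseqCoeff h2α n, fun ν μ ↦ ?_⟩
  rw [← Complex.Gamma_add_nat_div_Gamma_eq _ (add_natCast_ne_neg_natCast h2α μ), inv_div]
  push_cast
  ring_nf
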